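/- arXiv:1512.02274 — 2 statements merged into one kernel-verified Lean document; each statement's English description precedes it below -/
import Mathlib

section
/- For every type A and every n : ℕ, the map ι n : It A n → C A into the sequential colimit is weakly constant: for all u v : It A n, ι n u = ι n v. -/
universe u v

/-- The one-step truncation: quotient of `A` by the total relation. -/
def T (A : Type u) : Type u := Quot (fun (_ _ : A) => True)

/-- Point constructor of the one-step truncation. -/
def T.mk {A : Type u} : A → T A := Quot.mk _

/-- Path constructor of the one-step truncation. -/
def T.e {A : Type u} (a a' : A) : T.mk a = T.mk a' := Quot.sound trivial

/-- Iterated one-step truncation: `It A 0 = A`, `It A (n+1) = T (It A n)`. -/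
def It (A : Type u) : ℕ → Type u := fun n => Nat.rec A (fun _ ih => T ih) n

/-- The map from each stage to the next. -/
def f (A : Type u) (n : ℕ) : It A n → It A (n + 1) := T.mk

/-- The relation generating the sequential colimit. -/
inductive R (A : Type u) : (Σ n, It A n) → (Σ n, It A n) → Prop
  | mk (n : ℕ) (a : It A n) : R A ⟨n + 1, f A n a⟩ ⟨n, a⟩

/-- The sequential colimit of the iterated one-step truncations. -/
def C (A : Type u) : Type u := Quot (R A)

/-- The canonical maps into the colimit. -/
def ι {A : Type u} (n : ℕ) : It A n → C A := fun a => Quot.mk (R A) ⟨n, a⟩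

/-- The glue paths of the colimit. -/
def glue {A : Type u} (n : ℕ) (a : It A n) : ι (n + 1) (f A n a) = ι n a :=
  Quot.sound (R.mk n a)

theorem iota_weakly_constant {A : Type u} (n : ℕ) (u v : It A n) :
    ι n u = ι n v := by
  rw [← glue n u, ← glue n v]
  exact congrArg (ι (n+1)) (T.e u v)
end

section
/- For every type A, every a : A, every n : ℕ, and every b : It A n, there is an equality p a b : ι 0 a = ι n b in the sequential colimit C A; i.e., the image of the base point a at stage 0 is equal to the image of any point b at any stage n. -/
universe u v

theorem iota_zero_eq_iota {A : Type u} (a : A) (n : ℕ) (b : It A n) :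
    ι 0 a = ι n b := by
  induction n with
  | zero =>
    calc ι 0 a = ι 1 (f A 0 a) := (glue 0 a).symm
      _ = ι 1 (f A 0 b) := congrArg (ι 1) (T.e a b)
      _ = ι 0 b := glue 0 b
  | succ n ih =>
    induction b using Quot.ind with
    | _ c => exact (ih c).trans (glue n c).symm
end
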